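/- Let (S,≤) be a partially ordered set, let S' be a summit isolated suborder of (S,≤), let Q be the set of equivalence classes of ≡_{S'} partially ordered by ≤_{S'}, and let C ⊆ S. Then C is a closure system of (S,≤) if and only if C ∩ S' is a closure system of S' with the induced order and {{c} | c ∈ C \ S'} ∪ {S'} is a closure system of (Q, ≤_{S'}). -/

import Mathlib

/-- `S'` is an *isolated suborder* of the partially ordered set. -/
def IsIsolatedSuborder {α : Type*} [PartialOrder α] (S' : Set α) : Prop :=
  ∃ b t, IsLeast S' b ∧ IsGreatest S' t ∧
    ∀ x ∉ S', ∀ y ∈ S', (y ≤ x → t ≤ x) ∧ (x ≤ y → x ≤ b)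

/-- The equivalence class of `x` under `≡_{S'}`. -/
def eqClass {α : Type*} (S' : Set α) (x : α) : Set α :=
  {y | (x ∈ S' ∧ y ∈ S') ∨ (x ∉ S' ∧ y = x)}

/-- The set of equivalence classes of `≡_{S'}`. -/
def quotClasses {α : Type*} (S' : Set α) : Set (Set α) :=
  Set.range (eqClass S')

/-- The quotient relation on equivalence classes. -/
def qle {α : Type*} [PartialOrder α] (A B : Set α) : Prop :=
  ∃ a ∈ A, ∃ b ∈ B, a ≤ b

/-- `b` is the least element of `A` with respect to the relation `r`. -/
def IsLeastRel {β : Type*} (r : β → β → Prop) (A : Set β) (b : β) : Prop :=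
  b ∈ A ∧ ∀ y ∈ A, r b y

/-- `t` is the greatest element of `A` with respect to the relation `r`. -/
def IsGreatestRel {β : Type*} (r : β → β → Prop) (A : Set β) (t : β) : Prop :=
  t ∈ A ∧ ∀ y ∈ A, r y t

/-- `S'` is an isolated suborder of the ordered set with carrier `carrier` and
order relation `r`. -/
def IsIsolatedSuborderRel {β : Type*} (r : β → β → Prop) (carrier S' : Set β) : Prop :=
  S' ⊆ carrier ∧ ∃ b t, IsLeastRel r S' b ∧ IsGreatestRel r S' t ∧
    ∀ x ∈ carrier, x ∉ S' → ∀ y ∈ S', (r y x → r t x) ∧ (r x y → r x b)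

/-- `b` is a *bottleneck* of `x`: `b > x`, the interval `[x,b]` is a chain, and every
`y > x` lies in `[x,b]` or satisfies `y > b`. -/
def IsBottleneck {α : Type*} [PartialOrder α] (x b : α) : Prop :=
  x < b ∧ IsChain (· ≤ ·) (Set.Icc x b) ∧ ∀ y, x < y → y ∈ Set.Icc x b ∨ b < y

/-- A subset `C` of a partially ordered set is a *closure system* if for every `s`
the set of elements of `C` majorizing `s` has a least element. -/
def IsClosureSystem {α : Type*} [PartialOrder α] (C : Set α) : Prop :=
  ∀ s : α, ∃ m, IsLeast {c ∈ C | s ≤ c} m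

/-- `C` is a closure system of the ordered set with carrier `carrier` and order
relation `r`. -/
def IsClosureSystemRel {β : Type*} (r : β → β → Prop) (carrier C : Set β) : Prop :=
  C ⊆ carrier ∧ ∀ s ∈ carrier, ∃ m, (m ∈ C ∧ r s m) ∧ ∀ c ∈ C, r s c → r m c

/-!
Since its top is maximal, a summit isolated suborder `S'` is an upper set. So for `s ∈ S'` every
majorant of `s` in `C` already lies in `C ∩ S'`, and the closure condition at the points of `S'`
is the closure condition of `C ∩ S'` in `S'`. For `x ∉ S'`, the quotient closure of `{x}` is `{m}`
when the closure `m` of `x` lies outside `S'`, and `S'` otherwise; in the latter case `m` is the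
closure of the bottom of `S'`, because whatever lies outside `S'` and below it lies below its bottom.
-/

open Set

section Quotient

variable {α : Type*} {S' : Set α} {x : α}

lemma eqClass_of_mem (hx : x ∈ S') : eqClass S' x = S' := by
  ext y; simp [eqClass, hx]

lemma eqClass_of_notMem (hx : x ∉ S') : eqClass S' x = {x} := by
  ext y; simp [eqClass, hx]

variable [PartialOrder α]

lemma qle_singleton_left {B : Set α} : qle {x} B ↔ ∃ y ∈ B, x ≤ y := by
  simp [qle]

lemma qle_singleton_right {A : Set α} : qle A {x} ↔ ∃ a ∈ A, a ≤ x := by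
  simp [qle]

end Quotient

lemma IsIsolatedSuborder.isUpperSet {α : Type*} [PartialOrder α] {S' : Set α}
    (hS' : IsIsolatedSuborder S') (hsummit : ∃ t, IsGreatest S' t ∧ ∀ y : α, t ≤ y → y = t) :
    IsUpperSet S' := by
  obtain ⟨_, t, -, ht, hiso⟩ := hS'
  obtain ⟨t', ht', hmax⟩ := hsummit
  obtain rfl := ht.unique ht'
  intro y x hyx hy
  by_contra hx
  exact hx (hmax x ((hiso x hx y hy).1 hyx) ▸ ht.1)

section ClosureSystem

variable {α : Type*} [PartialOrder α] {S' C : Set α}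

lemma isClosureSystemRel_le_iff {X : Set α} :
    IsClosureSystemRel (· ≤ ·) X C ↔ C ⊆ X ∧ ∀ s ∈ X, ∃ m, IsLeast {c ∈ C | s ≤ c} m := by
  simp [IsClosureSystemRel, IsLeast, lowerBounds]

lemma isClosureSystemRel_inter_iff_of_isUpperSet (hup : IsUpperSet S') :
    IsClosureSystemRel (· ≤ ·) S' (C ∩ S') ↔ ∀ s ∈ S', ∃ m, IsLeast {c ∈ C | s ≤ c} m := by
  rw [isClosureSystemRel_le_iff]
  refine (and_iff_right inter_subset_right).trans (forall₂_congr fun s hs => ?_)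
  have : {c ∈ C ∩ S' | s ≤ c} = {c ∈ C | s ≤ c} :=
    ext fun c => ⟨fun ⟨hc, hsc⟩ => ⟨hc.1, hsc⟩, fun ⟨hc, hsc⟩ => ⟨⟨hc, hup hsc hs⟩, hsc⟩⟩
  rw [this]

lemma isClosureSystemRel_qle_quotClasses_iff (hne : S'.Nonempty) :
    IsClosureSystemRel qle (quotClasses S') (insert S' ((fun c => ({c} : Set α)) '' (C \ S'))) ↔
      ∀ x ∉ S', ∃ M, (M ∈ insert S' ((fun c => ({c} : Set α)) '' (C \ S')) ∧ qle {x} M) ∧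
        ∀ A ∈ insert S' ((fun c => ({c} : Set α)) '' (C \ S')), qle {x} A → qle M A := by
  obtain ⟨y, hy⟩ := hne
  have hsub : insert S' ((fun c => ({c} : Set α)) '' (C \ S')) ⊆ quotClasses S' := by
    rintro A (rfl | ⟨c, hc, rfl⟩)
    exacts [⟨y, eqClass_of_mem hy⟩, ⟨c, eqClass_of_notMem hc.2⟩]
  rw [IsClosureSystemRel, and_iff_right hsub, quotClasses, forall_mem_range]
  refine ⟨fun h x hx => eqClass_of_notMem hx ▸ h x, fun h x => ?_⟩
  by_cases hx : x ∈ S'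
  · rw [eqClass_of_mem hx]
    exact ⟨S', ⟨mem_insert _ _, y, hy, y, hy, le_rfl⟩, fun _ _ h => h⟩
  · exact eqClass_of_notMem hx ▸ h x hx

lemma exists_qle_least_singleton_iff (hup : IsUpperSet S') {b : α} (hb : IsLeast S' b)
    (hbelow : ∀ x ∉ S', ∀ y ∈ S', x ≤ y → x ≤ b)
    (hS : ∀ s ∈ S', ∃ m, IsLeast {c ∈ C | s ≤ c} m) {x : α} (hx : x ∉ S') :
    (∃ M, (M ∈ insert S' ((fun c => ({c} : Set α)) '' (C \ S')) ∧ qle {x} M) ∧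
        ∀ A ∈ insert S' ((fun c => ({c} : Set α)) '' (C \ S')), qle {x} A → qle M A) ↔
      ∃ m, IsLeast {c ∈ C | x ≤ c} m := by
  simp only [and_assoc, exists_mem_insert, forall_mem_insert, exists_mem_image, forall_mem_image,
    qle_singleton_left, qle_singleton_right, mem_singleton_iff, exists_eq_left]
  constructor
  · rintro (⟨⟨y, hy, hxy⟩, -, hmin⟩ | ⟨m, hm, hxm, hmS, hmin⟩)
    · obtain ⟨m, ⟨hmC, hbm⟩, hmb⟩ := hS b hb.1
      refine ⟨m, ⟨hmC, (hbelow x hx y hy hxy).trans hbm⟩, fun c ⟨hc, hxc⟩ => ?_⟩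
      by_cases hcS : c ∈ S'
      · exact hmb ⟨hc, hb.2 hcS⟩
      · obtain ⟨a, ha, hac⟩ := hmin ⟨hc, hcS⟩ hxc
        exact absurd (hup hac ha) hcS
    · refine ⟨m, ⟨hm.1, hxm⟩, fun c ⟨hc, hxc⟩ => ?_⟩
      by_cases hcS : c ∈ S'
      · obtain ⟨y, hy, hmy⟩ := hmS ⟨c, hcS, hxc⟩
        exact (hbelow m hm.2 y hy hmy).trans (hb.2 hcS)
      · exact hmin ⟨hc, hcS⟩ hxc
  · rintro ⟨m, ⟨hmC, hxm⟩, hmin⟩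
    by_cases hmS : m ∈ S'
    · refine .inl ⟨⟨m, hmS, hxm⟩, fun _ => ⟨b, hb.1, b, hb.1, le_rfl⟩, fun c hc hxc => ?_⟩
      exact absurd (hup (hmin ⟨hc.1, hxc⟩) hmS) hc.2
    · refine .inr ⟨m, ⟨hmC, hmS⟩, hxm, fun ⟨y, hy, hxy⟩ => ?_, fun c hc hxc => hmin ⟨hc.1, hxc⟩⟩
      obtain ⟨n, ⟨hnC, hyn⟩, -⟩ := hS y hy
      exact ⟨n, hup hyn hy, hmin ⟨hnC, hxy.trans hyn⟩⟩

end ClosureSystem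

/-- Theorem 13 (closures and summit isolated suborders): let `S'` be a summit
isolated suborder of `(S,≤)` and `C ⊆ S`. Then `C` is a closure system of `(S,≤)`
iff `C ∩ S'` is a closure system of `S'` with the induced order and
`{{c} | c ∈ C \ S'} ∪ {S'}` is a closure system of the quotient. -/
theorem closureSystem_iff_quotient_summit {α : Type*} [PartialOrder α]
    (S' : Set α) (hS' : IsIsolatedSuborder S')
    (hsummit : ∃ t, IsGreatest S' t ∧ ∀ y : α, t ≤ y → y = t)
    (C : Set α) :
    IsClosureSystem C ↔
      (IsClosureSystemRel (· ≤ ·) S' (C ∩ S') ∧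
        IsClosureSystemRel qle (quotClasses S')
          (insert S' ((fun c => ({c} : Set α)) '' (C \ S')))) := by
  have hup := hS'.isUpperSet hsummit
  obtain ⟨b, _, hb, -, hiso⟩ := hS'
  have hbelow : ∀ x ∉ S', ∀ y ∈ S', x ≤ y → x ≤ b := fun x hx y hy => (hiso x hx y hy).2
  rw [isClosureSystemRel_inter_iff_of_isUpperSet hup,
    isClosureSystemRel_qle_quotClasses_iff ⟨b, hb.1⟩]
  constructor
  · intro hC
    have hS : ∀ s ∈ S', ∃ m, IsLeast {c ∈ C | s ≤ c} m := fun s _ => hC s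
    exact ⟨hS, fun x hx => (exists_qle_least_singleton_iff hup hb hbelow hS hx).2 (hC x)⟩
  · rintro ⟨hS, hquot⟩ s
    by_cases hs : s ∈ S'
    · exact hS s hs
    · exact (exists_qle_least_singleton_iff hup hb hbelow hS hs).1 (hquot s hs)
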